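/- Let K be a number field and S a finite set of places containing all archimedean places and at least one nonarchimedean place ν ∈ S. Then the ring of S-integers O_S is dense in the completion K_ν. -/

import Mathlib

open IsDedekindDomain

/-! Approximate `x ∈ K` by `s x` with `s ∈ R`: by the Chinese remainder theorem choose `s ≡ 1`
modulo a high power of `v`, and divisible by a high power of each of the finitely many other primes
at which `x` is not integral. Then `s x` is integral away from `v`, hence an `S`-integer, and
`v (s x - x) = v (s - 1) v (x)` is as small as we like. Since `K` is dense in `K_v`, so are the
`S`-integers. -/

open WithZero in
theorem WithZero.exists_exp_neg_natCast_mul_lt (δ : ℤᵐ⁰) {γ : ℤᵐ⁰} (hγ : γ ≠ 0) :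
    ∃ k : ℕ, exp (-(k : ℤ)) * δ < γ := by
  rcases eq_or_ne δ 0 with rfl | hδ
  · exact ⟨0, by simpa [zero_lt_iff] using hγ⟩
  · obtain ⟨k, hk⟩ := exists_exp_neg_natCast_lt (div_ne_zero hγ hδ)
    exact ⟨k, (lt_div_iff₀ (zero_lt_iff.mpr hδ)).mp hk⟩

theorem Valued.mem_closure_of_forall_exists_lt {R Γ₀ : Type*} [Ring R]
    [LinearOrderedCommGroupWithZero Γ₀] [Valued R Γ₀] {s : Set R} {x : R}
    (h : ∀ γ : Γ₀ˣ, ∃ y ∈ s, Valued.v (y - x) < γ) : x ∈ closure s := by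
  refine mem_closure_iff_nhds.mpr fun t ht => ?_
  obtain ⟨γ, hγ⟩ := Valued.mem_nhds.mp ht
  obtain ⟨y, hys, hy⟩ := h (Units.map MonoidWithZeroHom.ValueGroup₀.embedding.toMonoidHom γ)
  exact ⟨y, hγ ((Valuation.restrict_lt_iff_lt_embedding _).mpr hy), hys⟩

namespace IsDedekindDomain.HeightOneSpectrum

open WithZero

variable {R : Type*} [CommRing R] [IsDedekindDomain R]

theorem exists_forall_intValuation_sub_le (T : Finset (HeightOneSpectrum R))
    (e : HeightOneSpectrum R → ℕ) (x : HeightOneSpectrum R → R) :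
    ∃ y : R, ∀ w ∈ T, w.intValuation (y - x w) ≤ exp (-(e w : ℤ)) := by
  obtain ⟨y, hy⟩ := exists_forall_sub_mem_ideal (s := T) (fun w => w.asIdeal) e
    (fun w _ => w.prime) (fun _ _ _ _ h => mt HeightOneSpectrum.ext h) (fun w => x w)
  exact ⟨y, fun w hw => (w.intValuation_le_pow_iff_mem _ _).mpr (hy w hw)⟩

variable {K : Type*} [Field K] [Algebra R K] [IsFractionRing R K]

theorem exists_mem_integer_valuation_sub_lt {S : Set (HeightOneSpectrum R)}
    {v : HeightOneSpectrum R} (hv : v ∈ S) (x : K) {γ : ℤᵐ⁰} (hγ : γ ≠ 0) :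
    ∃ y ∈ S.integer K, v.valuation K (y - x) < γ := by
  classical
  obtain ⟨m, hm⟩ := exists_exp_neg_natCast_mul_lt (v.valuation K x) hγ
  choose n hn using fun w : HeightOneSpectrum R =>
    exists_exp_neg_natCast_mul_lt (w.valuation K x) one_ne_zero
  obtain ⟨s, hs⟩ := exists_forall_intValuation_sub_le (insert v (Support.finite R x).toFinset)
    (Function.update n v m) (Pi.single v 1)
  refine ⟨algebraMap R K s * x, fun w hwS => ?_, ?_⟩
  · have hwv : w ≠ v := fun h => hwS (h ▸ hv)
    rw [map_mul, valuation_of_algebraMap]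
    by_cases hxw : 1 < w.valuation K x
    · have hsw := hs w (Finset.mem_insert_of_mem (by simpa [Support] using hxw))
      simp only [Pi.single_apply, hwv, if_false, sub_zero, Function.update_of_ne hwv] at hsw
      calc w.intValuation s * w.valuation K x ≤ exp (-(n w : ℤ)) * w.valuation K x := by gcongr
        _ ≤ 1 := (hn w).le
    · exact mul_le_one' (w.intValuation_le_one s) (not_lt.mp hxw)
  · have hsv := hs v (Finset.mem_insert_self _ _)
    simp only [Pi.single_eq_same, Function.update_self] at hsv
    calc v.valuation K (algebraMap R K s * x - x) = v.intValuation (s - 1) * v.valuation K x := by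
          rw [← sub_one_mul, ← map_one (algebraMap R K), ← map_sub, map_mul,
            valuation_of_algebraMap]
      _ ≤ exp (-(m : ℤ)) * v.valuation K x := by gcongr
      _ < γ := hm

theorem denseRange_integer_adicCompletion {S : Set (HeightOneSpectrum R)}
    {v : HeightOneSpectrum R} (hv : v ∈ S) :
    DenseRange fun x : S.integer K => algebraMap K (v.adicCompletion K) x := by
  refine Dense.of_closure ((denseRange_algebraMap K v).mono ?_)
  rintro _ ⟨k, rfl⟩
  refine Valued.mem_closure_of_forall_exists_lt fun γ => ?_
  obtain ⟨y, hyS, hy⟩ := exists_mem_integer_valuation_sub_lt hv k γ.ne_zero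
  refine ⟨_, ⟨⟨y, hyS⟩, rfl⟩, ?_⟩
  rwa [← map_sub, algebraMap_adicCompletion, Function.comp_apply, Algebra.algebraMap_self,
    RingHom.id_apply, adicCompletion.valued_coe]

end IsDedekindDomain.HeightOneSpectrum

theorem sInteger_dense_in_adicCompletion {K : Type*} [Field K] [NumberField K]
    (S : Finset (HeightOneSpectrum (NumberField.RingOfIntegers K)))
    (v : HeightOneSpectrum (NumberField.RingOfIntegers K)) (hv : v ∈ S) :
    DenseRange (fun x : (S : Set (HeightOneSpectrum (NumberField.RingOfIntegers K))).integer K =>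
      algebraMap K (v.adicCompletion K) (x : K)) :=
  HeightOneSpectrum.denseRange_integer_adicCompletion (Finset.mem_coe.mpr hv)
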